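/- Derandomization of a randomized algorithm on a finite input set, minimization (core of the derandomization Theorem of the appendix). Let I be a nonempty finite set, A a nonempty type, μ a probability mass function on A, and cost : A → I → ℝ≥0. Let ε > 0 and let t be a natural number with t > log₂|I| / log₂(1+ε). Then there exist a₁,…,a_t ∈ A such that for every σ ∈ I: min_{1≤i≤t} cost(a_i, σ) ≤ (1+ε)·E_{a∼μ}[cost(a,σ)]. -/

import Mathlib

/-!
Probabilistic method. Draw `a₁, …, a_t` independently from `μ`. By Markov's inequality a
single draw has `cost(a, σ) > (1+ε)·E[cost(·, σ)]` with probability at most `1/(1+ε)`, so all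
`t` draws do with probability at most `(1+ε)^(-t)`. A union bound over `σ ∈ I` bounds the
probability of failure by `|I|·(1+ε)^(-t)`, which is `< 1` once `t > log|I| / log(1+ε)`;
hence some draw works for every `σ` simultaneously.
-/

open scoped ENNReal NNReal
open MeasureTheory

theorem PMF.toMeasure_eq_sum_dirac {α : Type*} [MeasurableSpace α] (p : PMF α) :
    p.toMeasure = Measure.sum fun a => p a • Measure.dirac a := by
  ext s hs
  rw [p.toMeasure_apply hs, Measure.sum_apply _ hs]
  refine tsum_congr fun a => ?_
  by_cases ha : a ∈ s <;> simp [Measure.dirac_apply' a hs, ha]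

theorem PMF.lintegral_toMeasure {α : Type*} [MeasurableSpace α] [MeasurableSingletonClass α]
    (p : PMF α) (f : α → ℝ≥0∞) : ∫⁻ a, f a ∂p.toMeasure = ∑' a, p a * f a := by
  simp [p.toMeasure_eq_sum_dirac, lintegral_sum_measure, lintegral_smul_measure]

theorem measure_mul_lintegral_lt_le_inv {α : Type*} [MeasurableSpace α] {μ : Measure α}
    {f : α → ℝ≥0∞} (hf : AEMeasurable f μ) (c : ℝ≥0∞) :
    μ {x | c * ∫⁻ a, f a ∂μ < f x} ≤ c⁻¹ := by
  set E := ∫⁻ a, f a ∂μ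
  rcases eq_or_ne c 0 with rfl | hc
  · simp
  rcases eq_or_ne E 0 with hE0 | hE0
  · have hf0 : f =ᵐ[μ] 0 := (lintegral_eq_zero_iff' hf).1 hE0
    refine (measure_eq_zero_iff_ae_notMem.2 (hf0.mono fun x hx => ?_)).trans_le zero_le
    simp [hE0, hx]
  rcases eq_or_ne (c * E) ∞ with hcE | hcE
  · simp [hcE]
  calc μ {x | c * E < f x} ≤ μ {x | c * E ≤ f x} :=
        measure_mono fun x (hx : c * E < f x) => hx.le
    _ ≤ E / (c * E) := meas_ge_le_lintegral_div hf (mul_ne_zero hc hE0) hcE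
    _ = c⁻¹ := by
      have hE : E ≠ ∞ := fun h => hcE (by rw [h, ENNReal.mul_top hc])
      simpa using ENNReal.mul_div_mul_right 1 c hE0 hE

theorem exists_forall_exists_notMem_of_card_mul_pow_lt_one {ι α : Type*} [Fintype ι]
    [MeasurableSpace α] (ν : Measure α) [IsProbabilityMeasure ν] (B : ι → Set α)
    {p : ℝ≥0∞} (hB : ∀ σ, ν (B σ) ≤ p) (t : ℕ) (h : Fintype.card ι * p ^ t < 1) :
    ∃ a : Fin t → α, ∀ σ, ∃ i, a i ∉ B σ := by
  by_contra! hcover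
  have hcover : Set.univ ⊆ ⋃ σ, Set.univ.pi fun _ : Fin t => B σ := fun a _ => by
    simpa using hcover a
  refine (h.trans_le ?_).false
  calc (1 : ℝ≥0∞) = Measure.pi (fun _ : Fin t => ν) Set.univ := measure_univ.symm
    _ ≤ ∑ σ, Measure.pi (fun _ : Fin t => ν) (Set.univ.pi fun _ => B σ) :=
      (measure_mono hcover).trans (measure_iUnion_fintype_le _ _)
    _ = ∑ σ, ν (B σ) ^ t := by
      simp only [Measure.pi_pi, Finset.prod_const, Finset.card_univ, Fintype.card_fin]
    _ ≤ ∑ _σ : ι, p ^ t := Finset.sum_le_sum fun σ _ => pow_le_pow_left' (hB σ) t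
    _ = Fintype.card ι * p ^ t := by simp

theorem lt_pow_of_logb_div_logb_lt {b c x : ℝ} {t : ℕ} (hc : 1 < c) (hb : 1 < b)
    (h : Real.logb c x / Real.logb c b < t) : x < b ^ t := by
  rcases le_or_gt x 0 with hx | hx
  · exact hx.trans_lt (by positivity)
  rw [div_lt_iff₀ (Real.logb_pos hc hb), ← Real.logb_pow] at h
  exact (Real.logb_lt_logb_iff hc hx (by positivity)).1 h

theorem derandomize_min
    {I : Type*} [Fintype I]
    {A : Type*}
    (μ : PMF A) (cost : A → I → ℝ≥0)
    (ε : ℝ) (hε : 0 < ε)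
    (t : ℕ) (ht : Real.logb 2 (Fintype.card I) / Real.logb 2 (1 + ε) < t) :
    ∃ a : Fin t → A, ∀ σ : I, ∃ i : Fin t,
      (cost (a i) σ : ℝ≥0∞) ≤ ENNReal.ofReal (1 + ε) * ∑' d : A, μ d * (cost d σ : ℝ≥0∞) := by
  let _ : MeasurableSpace A := ⊤
  set C := ENNReal.ofReal (1 + ε)
  have hbad (σ : I) :
      μ.toMeasure {a | C * ∑' d, μ d * (cost d σ : ℝ≥0∞) < cost a σ} ≤ C⁻¹ := by
    simp_rw [← PMF.lintegral_toMeasure]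
    exact measure_mul_lintegral_lt_le_inv Measurable.of_discrete.aemeasurable C
  have hcard : (Fintype.card I : ℝ≥0∞) * C⁻¹ ^ t < 1 := by
    have h : (Fintype.card I : ℝ) < (1 + ε) ^ t :=
      lt_pow_of_logb_div_logb_lt one_lt_two (by linarith) ht
    rw [← ENNReal.inv_pow, ← div_eq_mul_inv]
    refine ENNReal.div_lt_of_lt_mul ?_
    rwa [one_mul, ← ENNReal.ofReal_pow (by linarith), ENNReal.natCast_lt_ofReal]
  obtain ⟨a, ha⟩ :=
    exists_forall_exists_notMem_of_card_mul_pow_lt_one μ.toMeasure _ hbad t hcard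
  exact ⟨a, fun σ => (ha σ).imp fun i hi => not_lt.1 hi⟩
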